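/- Let Λ be a discrete group having property RD with respect to a length function L. Then every subgroup H ≤ Λ has property RD with respect to the restricted length function L|_H: there is a polynomial P with real coefficients such that for every finitely supported f : H → ℂ, the operator norm of the convolution operator ξ ↦ f*ξ on ℓ²(H) is at most P(L(f))·‖f‖₂. -/

import Mathlib

namespace Stmt19

variable {G : Type*} [Group G]

/-- Convolution of a finitely supported function with an arbitrary function. -/
noncomputable def conv (f : G →₀ ℂ) (ξ : G → ℂ) : G → ℂ :=
  fun g => ∑ h ∈ f.support, f h * ξ (h⁻¹ * g)

/-- The operator norm of the convolution operator `ξ ↦ f * ξ` on `ℓ²(G)` is at most `C`. -/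
noncomputable def ConvOpNormLE (f : G →₀ ℂ) (C : ℝ) : Prop :=
  ∀ ξ : lp (fun _ : G => ℂ) 2, ∃ hmem : Memℓp (conv f (ξ : ∀ _ : G, ℂ)) 2,
    ‖(⟨conv f (ξ : ∀ _ : G, ℂ), hmem⟩ : lp (fun _ : G => ℂ) 2)‖ ≤ C * ‖ξ‖

/-- The ℓ²-norm of a finitely supported function. -/
noncomputable def l2norm (f : G →₀ ℂ) : ℝ :=
  Real.sqrt (∑ g ∈ f.support, ‖f g‖ ^ 2)

/-- `L(f) = max {L g : f g ≠ 0}`. -/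
noncomputable def lenOf (L : G → ℝ) (f : G →₀ ℂ) : ℝ :=
  sSup (L '' {g | f g ≠ 0})

def IsLengthFun (L : G → ℝ) : Prop :=
  L 1 = 0 ∧ (∀ g, 0 ≤ L g) ∧ (∀ g, L g⁻¹ = L g) ∧ ∀ g h, L (g * h) ≤ L g + L h

/-- Property RD with respect to `L`. -/
def HasRD (L : G → ℝ) : Prop :=
  ∃ P : Polynomial ℝ, ∀ f : G →₀ ℂ,
    ConvOpNormLE f (P.eval (lenOf L f) * l2norm f)

end Stmt19

/-!
Extension by zero along an injective homomorphism `φ : K →* G` is an isometry `ℓ²(K) → ℓ²(G)`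
which intertwines convolution by `f` with convolution by the pushforward of `f`; the pushforward
has the same length and the same `ℓ²`-norm. Hence the RD inequality for `G`, with the same
polynomial, restricts to `K`, in particular to a subgroup.
-/

open Function

section ExtendByZero

variable {ι κ E : Type*} [NormedAddCommGroup E] {i : ι → κ} {p : ENNReal}

lemma norm_extend_zero_rpow (hp : 0 < p.toReal) (ξ : ι → E) :
    (fun k => ‖extend i ξ 0 k‖ ^ p.toReal) = extend i (fun x => ‖ξ x‖ ^ p.toReal) 0 := by
  funext k
  rw [apply_extend (fun v : E => ‖v‖ ^ p.toReal)]
  congr 1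
  funext
  simp [Real.zero_rpow hp.ne']

lemma memℓp_extend_zero_iff (hi : Injective i) (hp : 0 < p.toReal) {ξ : ι → E} :
    Memℓp (extend i ξ 0) p ↔ Memℓp ξ p := by
  rw [memℓp_gen_iff hp, memℓp_gen_iff hp, norm_extend_zero_rpow hp, summable_extend_zero hi]

lemma lp.norm_extend_zero (hi : Injective i) (hp : 0 < p.toReal) {ξ : ι → E}
    (h : Memℓp (extend i ξ 0) p) :
    ‖(⟨extend i ξ 0, h⟩ : lp (fun _ => E) p)‖ =
      ‖(⟨ξ, (memℓp_extend_zero_iff hi hp).1 h⟩ : lp (fun _ => E) p)‖ := by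
  rw [lp.norm_eq_tsum_rpow hp, lp.norm_eq_tsum_rpow hp]
  simp only [norm_extend_zero_rpow hp, tsum_extend_zero hi]

lemma lp.exists_norm_le_of_extend_zero (hi : Injective i) (hp : 0 < p.toReal) {ξ : ι → E}
    {C : ℝ} (h : ∃ hm : Memℓp (extend i ξ 0) p, ‖(⟨extend i ξ 0, hm⟩ : lp (fun _ => E) p)‖ ≤ C) :
    ∃ hm : Memℓp ξ p, ‖(⟨ξ, hm⟩ : lp (fun _ => E) p)‖ ≤ C :=
  let ⟨hm, hle⟩ := h
  ⟨_, lp.norm_extend_zero hi hp hm ▸ hle⟩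

end ExtendByZero

namespace Stmt19

section Embedding

variable {α β : Type*}

lemma lenOf_embDomain (L : β → ℝ) (e : α ↪ β) (f : α →₀ ℂ) :
    lenOf L (f.embDomain e) = lenOf (L ∘ e) f := by
  change sSup (L '' support (f.embDomain e)) = sSup ((L ∘ e) '' support f)
  rw [Finsupp.fun_support_eq, Finsupp.fun_support_eq, Finsupp.support_embDomain,
    Finset.coe_map, ← Set.image_comp]

lemma l2norm_embDomain (e : α ↪ β) (f : α →₀ ℂ) : l2norm (f.embDomain e) = l2norm f := by
  simp only [l2norm, Finsupp.support_embDomain, Finset.sum_map, Finsupp.embDomain_apply_self]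

end Embedding

section InjectiveHom

variable {K G : Type*} [Group K] [Group G]

lemma conv_embDomain_extend_zero (φ : K →* G) (hφ : Injective φ) (f : K →₀ ℂ) (ξ : K → ℂ) :
    conv (f.embDomain ⟨φ, hφ⟩) (extend φ ξ 0) = extend φ (conv f ξ) 0 := by
  funext g
  simp only [conv, Finsupp.support_embDomain, Finset.sum_map, Finsupp.embDomain_apply_self]
  by_cases hg : ∃ k, φ k = g
  · obtain ⟨k, rfl⟩ := hg
    rw [hφ.extend_apply]
    refine Finset.sum_congr rfl fun h _ => ?_
    simp only [Embedding.coeFn_mk, ← map_inv, ← map_mul, hφ.extend_apply]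
  · rw [extend_apply' _ _ _ hg]
    refine Finset.sum_eq_zero fun h _ => ?_
    rw [extend_apply', Pi.zero_apply, mul_zero]
    rintro ⟨k, hk⟩
    exact hg ⟨h * k, by simp [hk]⟩

theorem HasRD.comp_injective {L : G → ℝ} (hRD : HasRD L) (φ : K →* G) (hφ : Injective φ) :
    HasRD (L ∘ φ) := by
  obtain ⟨P, hP⟩ := hRD
  refine ⟨P, fun f ξ => ?_⟩
  have hp : 0 < (2 : ENNReal).toReal := by norm_num
  have h := hP (f.embDomain ⟨φ, hφ⟩) ⟨extend φ ξ 0, (memℓp_extend_zero_iff hφ hp).2 ξ.2⟩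
  dsimp only at h
  rw [conv_embDomain_extend_zero, lenOf_embDomain, l2norm_embDomain,
    lp.norm_extend_zero hφ hp] at h
  exact lp.exists_norm_le_of_extend_zero hφ hp h

end InjectiveHom

end Stmt19

theorem statement19_general
    {Λ : Type*} [Group Λ] (L : Λ → ℝ)
    (hRD : Stmt19.HasRD L) (H : Subgroup Λ) :
    Stmt19.HasRD (fun h : H => L (h : Λ)) :=
  hRD.comp_injective H.subtype Subtype.val_injective

/-- **RD is inherited by subgroups.** If a discrete group `Λ` has property RD
with respect to a length function `L`, then every subgroup `H ≤ Λ` has property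
RD with respect to the restricted length function `L|_H`. -/
theorem statement19
    {Λ : Type*} [Group Λ] (L : Λ → ℝ) (hlen : Stmt19.IsLengthFun L)
    (hRD : Stmt19.HasRD L) (H : Subgroup Λ) :
    Stmt19.HasRD (fun h : H => L (h : Λ)) :=
  statement19_general L hRD H
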